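/- Let d, m ≥ 1 be integers, δ̂ ∈ (0,1], K₀ ≥ 0, H̄ ≥ 0, K > 0, T > 0, and let l₁,…,l_m ∈ ℤ^d satisfy l_k = e_k for k = 1,…,d and {l₁,…,l_m} = {−l₁,…,−l_m}. Let cH : ℝ^{d+1} × ℝ^m × ℝ × ℝ^d → ℝ satisfy: (i) for all u' ∈ ℝ^{d+1}, (t,x), and z, z̃ ∈ ℝ^m there exists a ∈ [δ̂, δ̂⁻¹]^m with cH(u', z, t, x) − cH(u', z̃, t, x) = Σ_{k=1}^m a_k (z_k − z̃_k); (ii) |cH(u', 0, t, x)| ≤ K₀|u'| + H̄ for all u', t, x. Define 𝒫(z) = max over a ∈ [δ̂/2, 2δ̂⁻¹]^m of Σ_k a_k z_k, and for v : [0,T] × ℝ^d → ℝ set F_h[v](t,x) = max( cH( (v(t,x), δ_{h,e_1}v(t,x),…,δ_{h,e_d}v(t,x)), (Δ_{h,l_1}v(t,x),…,Δ_{h,l_m}v(t,x)), t, x ), 𝒫(Δ_{h,l_1}v(t,x),…,Δ_{h,l_m}v(t,x)) − K ). Then there exist h₀ > 0 depending only on d, m, δ̂, K₀ and max_k‖l_k‖,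 and N depending only on d and K₀, such that for every h ∈ (0, h₀], every bounded g : ℝ^d → ℝ, and every bounded v : [0,T] × ℝ^d → ℝ satisfying v(t,x) = g(x) + ∫_t^T F_h[v](r, x) dr for all (t,x) ∈ [0,T] × ℝ^d (with the integrand integrable in r), one has |v(t,x)| ≤ N e^{NT} (H̄ + K + sup|g|) for all (t,x) ∈ [0,T] × ℝ^d. -/

import Mathlib

/-!
Write `W(t) = sup_x |v(t, x)|`. At a point where `±v(t, ·)` nearly attains `W(t)`, every second
difference of `±v` is at most `2 (W(t) ∓ v(t, x)) / h²`, and once `K₀ h ≤ δ̂` the first differences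
entering `H_h` are absorbed by the second differences in the coordinate directions (which are among
the `l_k`), whose weights are at least `δ̂`. Hence `±F_h[v] ≤ K₀ W + H̄ + λ_h (W ∓ v)`, where the
large constant `λ_h ≈ m / (δ̂ h²)` only multiplies the gap `W ∓ v`. Integrating the equation over a
short interval `[t, t + η]` starting from such a point gives
`W(t) ≤ (1 + K₀ η) W(t + η) + H̄ η + O(η²)`, where only the `O(η²)` term depends on `h`, and
Grönwall's inequality run backwards from `W(T) ≤ sup |g|` bounds `W` independently of `h`.
-/

open scoped BigOperators
open MeasureTheory

noncomputable section

/-- First-order finite difference `δ_{h,l}φ(x) = h⁻¹(φ(x+hl) − φ(x))`. -/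
def deltaOp (d : ℕ) (h : ℝ) (l : Fin d → ℝ)
    (φ : (Fin d → ℝ) → ℝ) (x : Fin d → ℝ) : ℝ :=
  (φ (x + h • l) - φ x) / h

/-- Second-order finite difference
`Δ_{h,l}φ(x) = h⁻²(φ(x+hl) − 2φ(x) + φ(x−hl))`. -/
def DeltaOp (d : ℕ) (h : ℝ) (l : Fin d → ℝ)
    (φ : (Fin d → ℝ) → ℝ) (x : Fin d → ℝ) : ℝ :=
  (φ (x + h • l) - 2 * φ x + φ (x - h • l)) / h ^ 2

/-- `𝒫(z) = max over (a₁,…,a_m) ∈ [δ̂/2, 2δ̂⁻¹]^m of Σ_k a_k z_k`. -/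
def Pcal (m : ℕ) (δhat : ℝ) (z : Fin m → ℝ) : ℝ :=
  sSup {s : ℝ | ∃ a : Fin m → ℝ,
    (∀ k, δhat / 2 ≤ a k ∧ a k ≤ 2 * δhat⁻¹) ∧ s = ∑ k, a k * z k}

/-- Euclidean norm of a vector. -/
def eunorm {n : ℕ} (u : Fin n → ℝ) : ℝ :=
  Real.sqrt (∑ i, u i ^ 2)

section FiniteDifferences

variable {d m : ℕ} {h M K₀ : ℝ} {l : Fin d → ℝ} {φ : (Fin d → ℝ) → ℝ} {x : Fin d → ℝ}

lemma deltaOp_const_mul (σ : ℝ) : deltaOp d h l (fun y => σ * φ y) x = σ * deltaOp d h l φ x := by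
  simp only [deltaOp]; ring

lemma DeltaOp_const_mul (σ : ℝ) : DeltaOp d h l (fun y => σ * φ y) x = σ * DeltaOp d h l φ x := by
  simp only [DeltaOp]; ring

lemma DeltaOp_le_of_le (hφ : ∀ y, φ y ≤ M) : DeltaOp d h l φ x ≤ 2 * (M - φ x) / h ^ 2 := by
  unfold DeltaOp
  gcongr
  linarith [hφ (x + h • l), hφ (x - h • l)]

lemma abs_deltaOp_add_DeltaOp_le {a : ℝ} (hK₀ : 0 ≤ K₀) (hh : 0 < h) (ha : K₀ * h ≤ a)
    (hφ : ∀ y, φ y ≤ M) :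
    K₀ * |deltaOp d h l φ x| + a * DeltaOp d h l φ x ≤ 3 * a * (M - φ x) / h ^ 2 := by
  set P := φ (x + h • l) - φ x
  set Q := φ (x - h • l) - φ x
  have hP : P ≤ M - φ x := by linarith [hφ (x + h • l)]
  have hQ : Q ≤ M - φ x := by linarith [hφ (x - h • l)]
  have hG : 0 ≤ M - φ x := sub_nonneg.2 (hφ x)
  have hKh : 0 ≤ K₀ * h := by positivity
  have hfirst : K₀ * h * |P| + a * P ≤ 2 * a * (M - φ x) := by
    rcases abs_cases P with ⟨hPa, hP0⟩ | ⟨hPa, hP0⟩ <;> rw [hPa] <;> nlinarith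
  have hsum : K₀ * h * |P| + a * (P + Q) ≤ 3 * a * (M - φ x) := by nlinarith
  have hδ : K₀ * |deltaOp d h l φ x| = K₀ * h * |P| / h ^ 2 := by
    rw [deltaOp, abs_div, abs_of_pos hh]; field_simp; rfl
  rw [hδ, DeltaOp, ← mul_div_assoc, ← add_div, show φ (x + h • l) - 2 * φ x + φ (x - h • l)
    = P + Q by ring]
  gcongr

lemma sum_abs_deltaOp_add_sum_DeltaOp_le {B : ℝ} (l : Fin m → Fin d → ℝ) {ι : Fin d → Fin m}
    (hι : Function.Injective ι) (hl : ∀ i, l (ι i) = fun j => if j = i then (1:ℝ) else 0)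
    (a : Fin m → ℝ) (ha : ∀ k, K₀ * h ≤ a k ∧ a k ≤ B) (hK₀ : 0 ≤ K₀) (hh : 0 < h)
    (hφ : ∀ y, φ y ≤ M) :
    K₀ * ∑ i, |deltaOp d h (fun j => if j = i then (1:ℝ) else 0) φ x|
      + ∑ k, a k * DeltaOp d h (l k) φ x ≤ 3 * (m * B / h ^ 2) * (M - φ x) := by
  have hG : 0 ≤ M - φ x := sub_nonneg.2 (hφ x)
  have ha0 : ∀ k, 0 ≤ a k := fun k => (mul_nonneg hK₀ hh.le).trans (ha k).1
  set slack : Fin m → ℝ := fun k => 3 * a k * (M - φ x) / h ^ 2 - a k * DeltaOp d h (l k) φ x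
  have hc : ∀ k, 0 ≤ slack k := by
    intro k
    have h2 := mul_le_mul_of_nonneg_left (DeltaOp_le_of_le (h := h) (l := l k) (x := x) hφ) (ha0 k)
    have h3 : 0 ≤ a k * (M - φ x) / h ^ 2 := by have := ha0 k; positivity
    simp only [slack]
    linarith [show a k * (2 * (M - φ x) / h ^ 2) + a k * (M - φ x) / h ^ 2
      = 3 * a k * (M - φ x) / h ^ 2 by ring]
  have hfirst : ∀ i,
      K₀ * |deltaOp d h (fun j => if j = i then (1:ℝ) else 0) φ x| ≤ slack (ι i) := by
    intro i
    have := abs_deltaOp_add_DeltaOp_le (l := l (ι i)) (x := x) hK₀ hh (ha (ι i)).1 hφ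
    rw [hl i] at this
    simp only [slack, hl i]
    linarith
  have hsum_first : K₀ * ∑ i, |deltaOp d h (fun j => if j = i then (1:ℝ) else 0) φ x|
      ≤ ∑ k, slack k :=
    calc _ = ∑ i, K₀ * |deltaOp d h (fun j => if j = i then (1:ℝ) else 0) φ x| := Finset.mul_sum ..
      _ ≤ ∑ i, slack (ι i) := Finset.sum_le_sum fun i _ => hfirst i
      _ = ∑ k ∈ Finset.univ.map ⟨ι, hι⟩, slack k := by rw [Finset.sum_map]; rfl
      _ ≤ ∑ k, slack k := Finset.sum_le_univ_sum_of_nonneg hc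
  have hsum_c : ∑ k, slack k + ∑ k, a k * DeltaOp d h (l k) φ x
      ≤ 3 * (m * B / h ^ 2) * (M - φ x) :=
    calc _ = ∑ k, 3 * a k * (M - φ x) / h ^ 2 := by
          rw [← Finset.sum_add_distrib]; simp only [slack, sub_add_cancel]
      _ ≤ ∑ _k : Fin m, 3 * B * (M - φ x) / h ^ 2 := by
          gcongr with k; exact (ha k).2
      _ = 3 * (m * B / h ^ 2) * (M - φ x) := by simp; ring
  linarith

lemma Pcal_le {δhat c : ℝ} (hδ : 0 ≤ δhat) {z : Fin m → ℝ} (hz : ∀ k, z k ≤ c) (hc : 0 ≤ c) :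
    Pcal m δhat z ≤ 2 * (m * δhat⁻¹) * c := by
  refine Real.sSup_le ?_ (by positivity)
  rintro _ ⟨b, hb, rfl⟩
  calc ∑ k, b k * z k ≤ ∑ _k : Fin m, 2 * δhat⁻¹ * c := by
        refine Finset.sum_le_sum fun k _ => ?_
        calc b k * z k ≤ b k * c := mul_le_mul_of_nonneg_left (hz k) (by linarith [(hb k).1])
          _ ≤ 2 * δhat⁻¹ * c := mul_le_mul_of_nonneg_right (hb k).2 hc
    _ = 2 * (m * δhat⁻¹) * c := by simp; ring

end FiniteDifferences

lemma eunorm_le_sum_abs {n : ℕ} (u : Fin n → ℝ) : eunorm u ≤ ∑ i, |u i| := by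
  refine Real.sqrt_le_iff.2 ⟨Finset.sum_nonneg fun i _ => abs_nonneg _, ?_⟩
  calc ∑ i, u i ^ 2 = ∑ i, |u i| ^ 2 := by simp
    _ ≤ (∑ i, |u i|) ^ 2 := Finset.sum_sq_le_sq_sum_of_nonneg fun i _ => abs_nonneg _

lemma eunorm_cons_le {n : ℕ} (a : ℝ) (w : Fin n → ℝ) :
    eunorm (Fin.cons a w : Fin (n + 1) → ℝ) ≤ |a| + ∑ i, |w i| := by
  simpa [Fin.sum_univ_succ] using eunorm_le_sum_abs (Fin.cons a w : Fin (n + 1) → ℝ)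

/-- The paper's `F_h[v](t, x)`, evaluated on the time slice `φ = v(t, ·)`. -/
def schemeOp (d m : ℕ) (δhat K h : ℝ) (l : Fin m → Fin d → ℤ)
    (cH : (Fin (d + 1) → ℝ) → (Fin m → ℝ) → ℝ → (Fin d → ℝ) → ℝ)
    (φ : (Fin d → ℝ) → ℝ) (t : ℝ) (x : Fin d → ℝ) : ℝ :=
  max (cH (Fin.cons (φ x) fun k : Fin d => deltaOp d h (fun j => if j = k then (1:ℝ) else 0) φ x)
      (fun k : Fin m => DeltaOp d h (fun i => (l k i : ℝ)) φ x) t x)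
    (Pcal m δhat (fun k : Fin m => DeltaOp d h (fun i => (l k i : ℝ)) φ x) - K)

section Scheme

variable {d m : ℕ} {δhat K₀ Hbar K h M : ℝ} {l : Fin m → Fin d → ℤ}
  {cH : (Fin (d + 1) → ℝ) → (Fin m → ℝ) → ℝ → (Fin d → ℝ) → ℝ}
  {φ : (Fin d → ℝ) → ℝ} {t : ℝ} {x : Fin d → ℝ}

lemma K₀_mul_eunorm_add_sum_DeltaOp_le (hdm : d ≤ m)
    (hl : ∀ i : Fin d, l (Fin.castLE hdm i) = fun j => if j = i then (1:ℤ) else 0)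
    {σ : ℝ} (hσ : |σ| = 1) (a : Fin m → ℝ) (ha : ∀ k, δhat ≤ a k ∧ a k ≤ δhat⁻¹)
    (hK₀ : 0 ≤ K₀) (hh : 0 < h) (hK₀h : K₀ * h ≤ δhat) (hφ : ∀ y, |φ y| ≤ M) :
    K₀ * eunorm (Fin.cons (φ x) fun k : Fin d =>
        deltaOp d h (fun j => if j = k then (1:ℝ) else 0) φ x : Fin (d + 1) → ℝ)
      + σ * ∑ k, a k * DeltaOp d h (fun i => (l k i : ℝ)) φ x
      ≤ K₀ * M + 3 * (m * δhat⁻¹ / h ^ 2) * (M - σ * φ x) := by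
  have hψ : ∀ y, σ * φ y ≤ M := fun y =>
    calc σ * φ y ≤ |σ * φ y| := le_abs_self _
      _ = |φ y| := by rw [abs_mul, hσ, one_mul]
      _ ≤ M := hφ y
  have hlR : ∀ i : Fin d, (fun j => (l (Fin.castLE hdm i) j : ℝ))
      = fun j => if j = i then (1:ℝ) else 0 := by
    intro i; funext j; simp [hl i]
  have hcore := sum_abs_deltaOp_add_sum_DeltaOp_le (x := x) (fun k i => (l k i : ℝ))
    (Fin.castLE_injective hdm) hlR a (fun k => ⟨hK₀h.trans (ha k).1, (ha k).2⟩) hK₀ hh hψ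
  simp only [deltaOp_const_mul, DeltaOp_const_mul, abs_mul, hσ, one_mul] at hcore
  have hnorm := mul_le_mul_of_nonneg_left (eunorm_cons_le (φ x) fun k : Fin d =>
    deltaOp d h (fun j => if j = k then (1:ℝ) else 0) φ x) hK₀
  have hφx := mul_le_mul_of_nonneg_left (hφ x) hK₀
  rw [Finset.mul_sum]
  simp only [mul_left_comm σ]
  linarith

lemma exists_abs_cH_sub_sum_le
    (hcH₁ : ∀ (u' : Fin (d + 1) → ℝ) (t : ℝ) (x : Fin d → ℝ) (z ztilde : Fin m → ℝ),
      ∃ a : Fin m → ℝ, (∀ k, δhat ≤ a k ∧ a k ≤ δhat⁻¹) ∧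
        cH u' z t x - cH u' ztilde t x = ∑ k, a k * (z k - ztilde k))
    (hcH₂ : ∀ (u' : Fin (d + 1) → ℝ) (t : ℝ) (x : Fin d → ℝ),
      |cH u' 0 t x| ≤ K₀ * eunorm u' + Hbar)
    (u' : Fin (d + 1) → ℝ) (z : Fin m → ℝ) (t : ℝ) (x : Fin d → ℝ) :
    ∃ a : Fin m → ℝ, (∀ k, δhat ≤ a k ∧ a k ≤ δhat⁻¹) ∧
      |cH u' z t x - ∑ k, a k * z k| ≤ K₀ * eunorm u' + Hbar := by
  obtain ⟨a, ha, hdiff⟩ := hcH₁ u' t x z 0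
  refine ⟨a, ha, ?_⟩
  simp only [Pi.zero_apply, sub_zero] at hdiff
  rw [← hdiff, sub_sub_cancel]
  exact hcH₂ u' t x

variable (hdm : d ≤ m)
  (hl : ∀ i : Fin d, l (Fin.castLE hdm i) = fun j => if j = i then (1:ℤ) else 0)
  (hcH₁ : ∀ (u' : Fin (d + 1) → ℝ) (t : ℝ) (x : Fin d → ℝ) (z ztilde : Fin m → ℝ),
    ∃ a : Fin m → ℝ, (∀ k, δhat ≤ a k ∧ a k ≤ δhat⁻¹) ∧
      cH u' z t x - cH u' ztilde t x = ∑ k, a k * (z k - ztilde k))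
  (hcH₂ : ∀ (u' : Fin (d + 1) → ℝ) (t : ℝ) (x : Fin d → ℝ),
    |cH u' 0 t x| ≤ K₀ * eunorm u' + Hbar)
include hdm hl hcH₁ hcH₂

lemma schemeOp_le (hK₀ : 0 ≤ K₀) (hHbar : 0 ≤ Hbar) (hK : 0 ≤ K) (hh : 0 < h)
    (hK₀h : K₀ * h ≤ δhat) (hφ : ∀ y, |φ y| ≤ M) :
    schemeOp d m δhat K h l cH φ t x
      ≤ K₀ * M + Hbar + 4 * (m * δhat⁻¹ / h ^ 2) * (M - φ x) := by
  set U : Fin (d + 1) → ℝ := Fin.cons (φ x) fun k : Fin d =>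
    deltaOp d h (fun j => if j = k then (1:ℝ) else 0) φ x
  set Z : Fin m → ℝ := fun k => DeltaOp d h (fun i => (l k i : ℝ)) φ x
  have hG : 0 ≤ M - φ x := by linarith [le_abs_self (φ x), hφ x]
  have hδ : 0 ≤ δhat := (mul_nonneg hK₀ hh.le).trans hK₀h
  have hc : 0 ≤ m * δhat⁻¹ / h ^ 2 := by positivity
  have hM : 0 ≤ K₀ * M := mul_nonneg hK₀ ((abs_nonneg _).trans (hφ x))
  obtain ⟨a, ha, hcH⟩ := exists_abs_cH_sub_sum_le hcH₁ hcH₂ U Z t x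
  have hcore := K₀_mul_eunorm_add_sum_DeltaOp_le (x := x) hdm hl (σ := 1) (by simp) a ha hK₀ hh
    hK₀h hφ
  simp only [one_mul] at hcore
  have hZ : ∀ k, Z k ≤ 2 * (M - φ x) / h ^ 2 := fun k => DeltaOp_le_of_le fun y =>
    (le_abs_self _).trans (hφ y)
  have hP := Pcal_le (m := m) hδ hZ (by positivity)
  refine max_le ?_ ?_
  · linarith [le_abs_self (cH U Z t x - ∑ k, a k * Z k), mul_le_mul_of_nonneg_left
      (by norm_num : (3:ℝ) ≤ 4) (mul_nonneg hc hG)]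
  · linarith [show 2 * (m * δhat⁻¹) * (2 * (M - φ x) / h ^ 2)
      = 4 * (m * δhat⁻¹ / h ^ 2) * (M - φ x) by ring]

lemma neg_schemeOp_le (hK₀ : 0 ≤ K₀) (hh : 0 < h) (hK₀h : K₀ * h ≤ δhat)
    (hφ : ∀ y, |φ y| ≤ M) :
    -schemeOp d m δhat K h l cH φ t x
      ≤ K₀ * M + Hbar + 4 * (m * δhat⁻¹ / h ^ 2) * (M + φ x) := by
  set U : Fin (d + 1) → ℝ := Fin.cons (φ x) fun k : Fin d =>
    deltaOp d h (fun j => if j = k then (1:ℝ) else 0) φ x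
  set Z : Fin m → ℝ := fun k => DeltaOp d h (fun i => (l k i : ℝ)) φ x
  have hG : 0 ≤ M + φ x := by linarith [neg_abs_le (φ x), hφ x]
  have hδ : 0 ≤ δhat := (mul_nonneg hK₀ hh.le).trans hK₀h
  have hc : 0 ≤ m * δhat⁻¹ / h ^ 2 := by positivity
  obtain ⟨a, ha, hcH⟩ := exists_abs_cH_sub_sum_le hcH₁ hcH₂ U Z t x
  have hcore := K₀_mul_eunorm_add_sum_DeltaOp_le (x := x) hdm hl (σ := -1) (by simp) a ha hK₀ hh
    hK₀h hφ
  simp only [neg_one_mul, sub_neg_eq_add] at hcore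
  have hmax : cH U Z t x ≤ schemeOp d m δhat K h l cH φ t x := le_max_left _ _
  linarith [neg_abs_le (cH U Z t x - ∑ k, a k * Z k), mul_le_mul_of_nonneg_left
    (by norm_num : (3:ℝ) ≤ 4) (mul_nonneg hc hG)]

end Scheme

open Filter Topology Set in
lemma le_gronwallBound_of_backward_step {W : ℝ → ℝ} {T δ K ε C : ℝ}
    (hW : ContinuousOn W (Icc 0 T)) (hWT : W T ≤ δ)
    (hstep : ∀ t η, 0 ≤ t → 0 < η → t + η ≤ T →
      W t ≤ (1 + K * η) * W (t + η) + ε * η + C * η ^ 2) :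
    ∀ t ∈ Icc 0 T, W t ≤ gronwallBound δ K ε (T - t) := by
  intro t ht
  have hcont : ContinuousOn (fun s => W (T - s)) (Icc 0 T) :=
    hW.comp (continuousOn_const.sub continuousOn_id) fun s hs =>
      ⟨by linarith [hs.2], by linarith [hs.1]⟩
  have hslope : ∀ s ∈ Ico 0 T, ∀ r, K * W (T - s) + ε < r →
      ∃ᶠ z in 𝓝[>] s, (z - s)⁻¹ * (W (T - z) - W (T - s)) < r := by
    intro s hs r hr
    have hlim : Tendsto (fun z => K * W (T - s) + ε + C * (z - s)) (𝓝[>] s)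
        (𝓝 (K * W (T - s) + ε)) :=
      tendsto_nhdsWithin_of_tendsto_nhds (by
        simpa using (show Continuous fun z : ℝ => K * W (T - s) + ε + C * (z - s) by
          fun_prop).tendsto s)
    refine ((hlim.eventually (gt_mem_nhds hr)).and (Ioc_mem_nhdsGT hs.2)).mono ?_ |>.frequently
    rintro z ⟨hzr, hzs, hzT⟩
    have hη : 0 < z - s := sub_pos.2 hzs
    have h := hstep (T - z) (z - s) (by linarith) hη (by linarith [hs.1])
    rw [show T - z + (z - s) = T - s by ring] at h
    refine lt_of_le_of_lt ?_ hzr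
    rw [inv_mul_le_iff₀ hη]
    nlinarith
  have := le_gronwallBound_of_liminf_deriv_right_le hcont hslope (by simpa using hWT)
    (fun _ _ => le_rfl) (T - t) ⟨by linarith [ht.2], by linarith [ht.1]⟩
  simpa using this

open Real in
lemma gronwallBound_le_mul_exp {δ K ε x : ℝ} (hδ : 0 ≤ δ) (hε : 0 ≤ ε) (hK : 0 ≤ K)
    (hx : 0 ≤ x) : gronwallBound δ K ε x ≤ (δ + ε) * exp ((K + 1) * x) := by
  have hx_exp : x ≤ exp x := by linarith [add_one_le_exp x]
  rcases hK.eq_or_lt with rfl | hKpos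
  · rw [gronwallBound_K0, zero_add, one_mul]
    nlinarith [mul_nonneg hδ (sub_nonneg.2 (one_le_exp hx)), mul_nonneg hε (sub_nonneg.2 hx_exp)]
  · have hsplit : (δ + ε) * exp ((K + 1) * x)
        = δ * exp (K * x) * exp x + ε * exp x * exp (K * x) := by
      rw [show (K + 1) * x = K * x + x by ring, exp_add]; ring
    rw [gronwallBound_of_K_ne_0 hKpos.ne', hsplit]
    have hexp : exp (K * x) - 1 ≤ K * x * exp (K * x) := by
      have h₁ := mul_le_mul_of_nonneg_right (add_one_le_exp (-(K * x))) (exp_pos (K * x)).le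
      rw [← exp_add, neg_add_cancel, exp_zero] at h₁
      linarith
    have h₂ : ε / K * (exp (K * x) - 1) ≤ ε * x * exp (K * x) := by
      calc ε / K * (exp (K * x) - 1) ≤ ε / K * (K * x * exp (K * x)) := by gcongr
        _ = ε * x * exp (K * x) := by field_simp
    have h₃ : δ * exp (K * x) ≤ δ * exp (K * x) * exp x :=
      le_mul_of_one_le_right (by positivity) (one_le_exp hx)
    have h₄ : ε * x * exp (K * x) ≤ ε * exp x * exp (K * x) := by gcongr
    linarith

section IntegralSolution

open Set

variable {X : Type*} {T L K₀ Hbar c : ℝ} {g : X → ℝ} {F v : ℝ → X → ℝ}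

/-- Integral form of `∂ₜv + F = 0` on `[0, T]` with `v(T, ·) = g`. -/
def IsIntegralSolution (T : ℝ) (g : X → ℝ) (F v : ℝ → X → ℝ) : Prop :=
  ∀ t ∈ Icc (0:ℝ) T, ∀ x, IntervalIntegrable (fun r => F r x) volume t T ∧
    v t x = g x + ∫ r in t..T, F r x

namespace IsIntegralSolution

lemma neg (hv : IsIntegralSolution T g F v) : IsIntegralSolution T (-g) (-F) (-v) := by
  intro t ht x
  obtain ⟨hint, heq⟩ := hv t ht x
  refine ⟨hint.neg, ?_⟩
  simp only [Pi.neg_apply, heq, intervalIntegral.integral_neg]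
  ring

lemma sub_eq_integral (hv : IsIntegralSolution T g F v) {s t : ℝ} (hs : s ∈ Icc 0 T)
    (ht : t ∈ Icc 0 T) (hst : s ≤ t) (x : X) : v s x - v t x = ∫ r in s..t, F r x := by
  obtain ⟨hints, hs_eq⟩ := hv s hs x
  obtain ⟨hintt, ht_eq⟩ := hv t ht x
  have hint : IntervalIntegrable (fun r => F r x) volume s t :=
    hints.mono_set (by rw [uIcc_of_le hst, uIcc_of_le hs.2]; exact Icc_subset_Icc le_rfl ht.2)
  rw [hs_eq, ht_eq, ← intervalIntegral.integral_add_adjacent_intervals hint hintt]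
  ring

lemma abs_sub_le (hv : IsIntegralSolution T g F v) (hF : ∀ r ∈ Icc 0 T, ∀ x, |F r x| ≤ L)
    {s t : ℝ} (hs : s ∈ Icc 0 T) (ht : t ∈ Icc 0 T) (hst : s ≤ t) (x : X) :
    |v s x - v t x| ≤ L * (t - s) := by
  have hbound := intervalIntegral.norm_integral_le_of_norm_le_const (C := L)
    (f := fun r => F r x) fun r hr => by
      rw [uIoc_of_le hst] at hr
      exact hF r ⟨hs.1.trans hr.1.le, hr.2.trans ht.2⟩ x
  rwa [Real.norm_eq_abs, abs_of_nonneg (sub_nonneg.2 hst), ← hv.sub_eq_integral hs ht hst]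
    at hbound

lemma abs_iSup_sub_le [Nonempty X] (hv : IsIntegralSolution T g F v)
    (hbdd : ∀ r ∈ Icc 0 T, BddAbove (range fun y => |v r y|))
    (hF : ∀ r ∈ Icc 0 T, ∀ x, |F r x| ≤ L) {s t : ℝ} (hs : s ∈ Icc 0 T) (ht : t ∈ Icc 0 T) :
    |(⨆ y, |v s y|) - (⨆ y, |v t y|)| ≤ L * |s - t| := by
  have key : ∀ {s t}, s ∈ Icc 0 T → t ∈ Icc 0 T → s ≤ t →
      (⨆ y, |v s y|) ≤ (⨆ y, |v t y|) + L * (t - s) ∧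
      (⨆ y, |v t y|) ≤ (⨆ y, |v s y|) + L * (t - s) := by
    intro s t hs ht hst
    have hlip := hv.abs_sub_le hF hs ht hst
    refine ⟨ciSup_le fun y => ?_, ciSup_le fun y => ?_⟩
    · linarith [abs_sub_abs_le_abs_sub (v s y) (v t y), hlip y, le_ciSup (hbdd t ht) y]
    · linarith [abs_sub_abs_le_abs_sub (v t y) (v s y), abs_sub_comm (v s y) (v t y), hlip y,
        le_ciSup (hbdd s hs) y]
  rcases le_total s t with hst | hts
  · obtain ⟨h₁, h₂⟩ := key hs ht hst
    rw [abs_sub_le_iff, abs_of_nonpos (sub_nonpos.2 hst)]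
    constructor <;> linarith
  · obtain ⟨h₁, h₂⟩ := key ht hs hts
    rw [abs_sub_le_iff, abs_of_nonneg (sub_nonneg.2 hts)]
    constructor <;> linarith

lemma le_backward_step (hv : IsIntegralSolution T g F v) {W : ℝ → ℝ}
    (hvW : ∀ r ∈ Icc 0 T, ∀ y, |v r y| ≤ W r)
    (hW : ∀ s ∈ Icc 0 T, ∀ t ∈ Icc 0 T, |W s - W t| ≤ L * |s - t|)
    (hFL : ∀ r ∈ Icc 0 T, ∀ y, |F r y| ≤ L)
    (hF : ∀ r ∈ Icc 0 T, ∀ y, F r y ≤ K₀ * W r + Hbar + c * (W r - v r y))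
    (hK₀ : 0 ≤ K₀) (hHbar : 0 ≤ Hbar) (hc : 0 ≤ c) {t η : ℝ} (ht : 0 ≤ t) (hη : 0 ≤ η)
    (htη : t + η ≤ T) (x : X) :
    v t x ≤ (1 + K₀ * η) * W (t + η) + Hbar * η + (K₀ + 2 * c) * L * η ^ 2 := by
  have ht₀ : t ∈ Icc 0 T := ⟨ht, by linarith⟩
  have ht₁ : t + η ∈ Icc 0 T := ⟨by linarith, htη⟩
  have hL : 0 ≤ L := (abs_nonneg _).trans (hFL t ht₀ x)
  set w := W (t + η)
  have hw : 0 ≤ w := (abs_nonneg _).trans (hvW _ ht₁ x)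
  set R := K₀ * (w + L * η) + Hbar + c * (w + 2 * L * η - v t x)
  have hFR : ∀ r ∈ Icc t (t + η), F r x ≤ R := by
    intro r hr
    have hr₀ : r ∈ Icc 0 T := ⟨ht.trans hr.1, hr.2.trans htη⟩
    have hWr : W r ≤ w + L * η := by
      have := (le_abs_self _).trans (hW r hr₀ _ ht₁)
      rw [abs_of_nonpos (by linarith [hr.2])] at this
      nlinarith [hr.1]
    have hvr : v t x - v r x ≤ L * η := by
      have := (le_abs_self _).trans (hv.abs_sub_le hFL ht₀ hr₀ hr.1 x)
      nlinarith [hr.2]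
    calc F r x ≤ K₀ * W r + Hbar + c * (W r - v r x) := hF r hr₀ x
      _ ≤ R := by
        have := mul_le_mul_of_nonneg_left hWr hK₀
        have := mul_le_mul_of_nonneg_left (show W r - v r x ≤ w + 2 * L * η - v t x by linarith) hc
        linarith
  have hint : v t x - v (t + η) x ≤ η * R := by
    rw [hv.sub_eq_integral ht₀ ht₁ (by linarith)]
    have := intervalIntegral.integral_mono_on (by linarith) ((hv t ht₀ x).1.mono_set
      (by rw [uIcc_of_le (by linarith), uIcc_of_le ht₀.2]; exact Icc_subset_Icc le_rfl htη))
      intervalIntegrable_const hFR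
    simpa using this
  have hv₁ : v (t + η) x ≤ w := (le_abs_self _).trans (hvW _ ht₁ x)
  -- `R` involves `v t x` itself; solving for `v t x` divides by `1 + c η ≥ 1`
  rcases le_or_gt (v t x) w with hle | hgt
  · have : 0 ≤ K₀ * η * w + Hbar * η + (K₀ + 2 * c) * L * η ^ 2 := by positivity
    linarith
  · nlinarith [mul_nonneg hK₀ hη, mul_nonneg hc hη,
      mul_nonneg (mul_nonneg hc hη) (sub_pos.2 hgt).le]

theorem abs_le_gronwallBound [Nonempty X] {Cg : ℝ} (hv : IsIntegralSolution T g F v)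
    (hbdd : ∃ M, ∀ t ∈ Icc 0 T, ∀ x, |v t x| ≤ M) (hg : ∀ x, |g x| ≤ Cg)
    (hK₀ : 0 ≤ K₀) (hHbar : 0 ≤ Hbar) (hc : 0 ≤ c)
    (hF : ∀ r ∈ Icc 0 T, ∀ M, (∀ y, |v r y| ≤ M) → ∀ y,
      F r y ≤ K₀ * M + Hbar + c * (M - v r y) ∧ -F r y ≤ K₀ * M + Hbar + c * (M + v r y)) :
    ∀ t ∈ Icc 0 T, ∀ x, |v t x| ≤ gronwallBound Cg K₀ Hbar (T - t) := by
  obtain ⟨M, hM⟩ := hbdd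
  set W : ℝ → ℝ := fun r => ⨆ y, |v r y|
  have hbddW : ∀ r ∈ Icc 0 T, BddAbove (range fun y => |v r y|) := fun r hr =>
    ⟨M, by rintro _ ⟨y, rfl⟩; exact hM r hr y⟩
  have hvW : ∀ r ∈ Icc 0 T, ∀ y, |v r y| ≤ W r := fun r hr y => le_ciSup (hbddW r hr) y
  have hFL : ∀ r ∈ Icc 0 T, ∀ y, |F r y| ≤ K₀ * M + Hbar + 2 * c * M := by
    intro r hr y
    obtain ⟨hup, hlow⟩ := hF r hr M (hM r hr) y
    have hvy := abs_le.1 (hM r hr y)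
    have h₁ := mul_le_mul_of_nonneg_left (show M - v r y ≤ 2 * M by linarith) hc
    have h₂ := mul_le_mul_of_nonneg_left (show M + v r y ≤ 2 * M by linarith) hc
    exact abs_le'.2 ⟨by linarith, by linarith⟩
  have hWlip : ∀ s ∈ Icc 0 T, ∀ t ∈ Icc 0 T, |W s - W t| ≤ (K₀ * M + Hbar + 2 * c * M) * |s - t| :=
    fun s hs t ht => hv.abs_iSup_sub_le hbddW hFL hs ht
  have hcont : ContinuousOn W (Icc 0 T) :=
    (LipschitzOnWith.of_dist_le' fun s hs t ht => by
      simpa only [Real.dist_eq] using hWlip s hs t ht).continuousOn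
  have hstep : ∀ t η, 0 ≤ t → 0 < η → t + η ≤ T → W t ≤ (1 + K₀ * η) * W (t + η) + Hbar * η
      + (K₀ + 2 * c) * (K₀ * M + Hbar + 2 * c * M) * η ^ 2 := by
    intro t η ht hη htη
    refine ciSup_le fun x => abs_le'.2 ⟨?_, ?_⟩
    · exact hv.le_backward_step hvW hWlip hFL (fun r hr y => (hF r hr _ (hvW r hr) y).1)
        hK₀ hHbar hc ht hη.le htη x
    · simpa using hv.neg.le_backward_step (W := W) (by simpa using hvW) hWlip
        (by simpa using hFL) (fun r hr y => by simpa using (hF r hr _ (hvW r hr) y).2)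
        hK₀ hHbar hc ht hη.le htη x
  intro t ht x
  have hWT : W T ≤ Cg := ciSup_le fun y => by
    rw [(hv T ⟨ht.1.trans ht.2, le_rfl⟩ y).2, intervalIntegral.integral_same, add_zero]
    exact hg y
  exact (hvW t ht x).trans (le_gronwallBound_of_backward_step hcont hWT hstep t ht)

end IsIntegralSolution

end IntegralSolution

theorem finite_difference_scheme_bound_general
    (d m : ℕ) (K₀ : ℝ) (hK₀ : 0 ≤ K₀) :
    ∃ N : ℝ, 0 < N ∧
    ∀ (δhat : ℝ), δhat ∈ Set.Ioc (0:ℝ) 1 →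
    ∀ (hdm : d ≤ m) (l : Fin m → Fin d → ℤ),
      (∀ i : Fin d, l (Fin.castLE hdm i) = fun j => if j = i then (1:ℤ) else 0) →
      (∀ k : Fin m, ∃ k' : Fin m, l k' = -l k) →
    ∃ h₀ : ℝ, 0 < h₀ ∧
    ∀ (Hbar K T : ℝ), 0 ≤ Hbar → 0 < K → 0 < T →
    ∀ (cH : (Fin (d + 1) → ℝ) → (Fin m → ℝ) → ℝ → (Fin d → ℝ) → ℝ),
      -- (i) increments of `cH` in `z` are given by coefficients in `[δ̂, δ̂⁻¹]^m`
      (∀ (u' : Fin (d + 1) → ℝ) (t : ℝ) (x : Fin d → ℝ) (z ztilde : Fin m → ℝ),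
        ∃ a : Fin m → ℝ, (∀ k, δhat ≤ a k ∧ a k ≤ δhat⁻¹) ∧
          cH u' z t x - cH u' ztilde t x = ∑ k, a k * (z k - ztilde k)) →
      -- (ii) `|cH(u',0,t,x)| ≤ K₀|u'| + H̄`
      (∀ (u' : Fin (d + 1) → ℝ) (t : ℝ) (x : Fin d → ℝ),
        |cH u' 0 t x| ≤ K₀ * eunorm u' + Hbar) →
    ∀ (g : (Fin d → ℝ) → ℝ) (Cg : ℝ), (∀ x, |g x| ≤ Cg) →
    ∀ (h : ℝ), h ∈ Set.Ioc 0 h₀ →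
    ∀ (v : ℝ → (Fin d → ℝ) → ℝ) (Fh : ℝ → (Fin d → ℝ) → ℝ),
      -- `Fh = F_h[v](t,x) = max(H_h[v](t,x), P_h[v](t,x) − K)`
      (∀ (t : ℝ) (x : Fin d → ℝ), Fh t x =
        max (cH
            (Fin.cons (v t x) (fun k : Fin d =>
              deltaOp d h (fun j => if j = k then (1:ℝ) else 0) (fun y => v t y) x))
            (fun k : Fin m => DeltaOp d h (fun i => ((l k i : ℝ))) (fun y => v t y) x) t x)
          (Pcal m δhat
            (fun k : Fin m => DeltaOp d h (fun i => ((l k i : ℝ))) (fun y => v t y) x) - K)) →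
      -- `v` is bounded on `[0,T] × ℝ^d`
      (∃ Mv : ℝ, ∀ t ∈ Set.Icc (0:ℝ) T, ∀ x : Fin d → ℝ, |v t x| ≤ Mv) →
      -- `v(t,x) = g(x) + ∫_t^T F_h[v](r,x) dr`, the integrand being integrable
      (∀ t ∈ Set.Icc (0:ℝ) T, ∀ x : Fin d → ℝ,
        IntervalIntegrable (fun r => Fh r x) volume t T ∧
        v t x = g x + ∫ r in t..T, Fh r x) →
    ∀ t ∈ Set.Icc (0:ℝ) T, ∀ x : Fin d → ℝ,
      |v t x| ≤ N * Real.exp (N * T) * (Hbar + K + Cg) := by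
  refine ⟨K₀ + 1, by positivity, ?_⟩
  rintro δhat ⟨hδ, -⟩ hdm l hl -
  refine ⟨δhat / (K₀ + 1), by positivity, ?_⟩
  rintro Hbar K T hHbar hK - cH hcH₁ hcH₂ g Cg hg h ⟨hh, hhδ⟩ v Fh hFh hbdd hsol t ht x
  have hK₀h : K₀ * h ≤ δhat := by
    rw [le_div_iff₀ (by positivity)] at hhδ
    nlinarith
  have hCg : 0 ≤ Cg := (abs_nonneg _).trans (hg 0)
  have hF : ∀ r ∈ Set.Icc 0 T, ∀ M, (∀ y, |v r y| ≤ M) → ∀ y,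
      Fh r y ≤ K₀ * M + Hbar + 4 * (m * δhat⁻¹ / h ^ 2) * (M - v r y) ∧
      -Fh r y ≤ K₀ * M + Hbar + 4 * (m * δhat⁻¹ / h ^ 2) * (M + v r y) := fun r _ M hM y => by
    rw [hFh r y]
    exact ⟨schemeOp_le hdm hl hcH₁ hcH₂ hK₀ hHbar hK.le hh hK₀h hM,
      neg_schemeOp_le hdm hl hcH₁ hcH₂ hK₀ hh hK₀h hM⟩
  calc |v t x| ≤ gronwallBound Cg K₀ Hbar (T - t) :=
        IsIntegralSolution.abs_le_gronwallBound hsol hbdd hg hK₀ hHbar (by positivity) hF t ht x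
    _ ≤ (Cg + Hbar) * Real.exp ((K₀ + 1) * (T - t)) :=
        gronwallBound_le_mul_exp hCg hHbar hK₀ (sub_nonneg.2 ht.2)
    _ ≤ (Hbar + K + Cg) * Real.exp ((K₀ + 1) * T) :=
        mul_le_mul (by linarith) (Real.exp_le_exp.2 (by nlinarith [ht.1])) (by positivity)
          (by positivity)
    _ = Real.exp ((K₀ + 1) * T) * (Hbar + K + Cg) := mul_comm _ _
    _ ≤ (K₀ + 1) * Real.exp ((K₀ + 1) * T) * (Hbar + K + Cg) := by
        rw [mul_assoc]
        exact le_mul_of_one_le_left (by positivity) (by linarith)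

/-- Corollary 6.2 of Krylov, "An ersatz existence theorem for fully nonlinear
parabolic equations without convexity assumptions": a uniform bound on the
bounded solution of the finite-difference scheme
`∂_t v + max(H_h[v], P_h[v] − K) = 0` on `[0,T] × ℝ^d` with terminal data `g`. -/
theorem finite_difference_scheme_bound
    (d m : ℕ) (hd : 1 ≤ d) (hm : 1 ≤ m) (K₀ : ℝ) (hK₀ : 0 ≤ K₀) :
    ∃ N : ℝ, 0 < N ∧
    ∀ (δhat : ℝ), δhat ∈ Set.Ioc (0:ℝ) 1 →
    ∀ (hdm : d ≤ m) (l : Fin m → Fin d → ℤ),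
      (∀ i : Fin d, l (Fin.castLE hdm i) = fun j => if j = i then (1:ℤ) else 0) →
      (∀ k : Fin m, ∃ k' : Fin m, l k' = -l k) →
    ∃ h₀ : ℝ, 0 < h₀ ∧
    ∀ (Hbar K T : ℝ), 0 ≤ Hbar → 0 < K → 0 < T →
    ∀ (cH : (Fin (d + 1) → ℝ) → (Fin m → ℝ) → ℝ → (Fin d → ℝ) → ℝ),
      -- (i) increments of `cH` in `z` are given by coefficients in `[δ̂, δ̂⁻¹]^m`
      (∀ (u' : Fin (d + 1) → ℝ) (t : ℝ) (x : Fin d → ℝ) (z ztilde : Fin m → ℝ),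
        ∃ a : Fin m → ℝ, (∀ k, δhat ≤ a k ∧ a k ≤ δhat⁻¹) ∧
          cH u' z t x - cH u' ztilde t x = ∑ k, a k * (z k - ztilde k)) →
      -- (ii) `|cH(u',0,t,x)| ≤ K₀|u'| + H̄`
      (∀ (u' : Fin (d + 1) → ℝ) (t : ℝ) (x : Fin d → ℝ),
        |cH u' 0 t x| ≤ K₀ * eunorm u' + Hbar) →
    ∀ (g : (Fin d → ℝ) → ℝ) (Cg : ℝ), (∀ x, |g x| ≤ Cg) →
    ∀ (h : ℝ), h ∈ Set.Ioc 0 h₀ →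
    ∀ (v : ℝ → (Fin d → ℝ) → ℝ) (Fh : ℝ → (Fin d → ℝ) → ℝ),
      -- `Fh = F_h[v](t,x) = max(H_h[v](t,x), P_h[v](t,x) − K)`
      (∀ (t : ℝ) (x : Fin d → ℝ), Fh t x =
        max (cH
            (Fin.cons (v t x) (fun k : Fin d =>
              deltaOp d h (fun j => if j = k then (1:ℝ) else 0) (fun y => v t y) x))
            (fun k : Fin m => DeltaOp d h (fun i => ((l k i : ℝ))) (fun y => v t y) x) t x)
          (Pcal m δhat
            (fun k : Fin m => DeltaOp d h (fun i => ((l k i : ℝ))) (fun y => v t y) x) - K)) →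
      -- `v` is bounded on `[0,T] × ℝ^d`
      (∃ Mv : ℝ, ∀ t ∈ Set.Icc (0:ℝ) T, ∀ x : Fin d → ℝ, |v t x| ≤ Mv) →
      -- `v(t,x) = g(x) + ∫_t^T F_h[v](r,x) dr`, the integrand being integrable
      (∀ t ∈ Set.Icc (0:ℝ) T, ∀ x : Fin d → ℝ,
        IntervalIntegrable (fun r => Fh r x) volume t T ∧
        v t x = g x + ∫ r in t..T, Fh r x) →
    ∀ t ∈ Set.Icc (0:ℝ) T, ∀ x : Fin d → ℝ,
      |v t x| ≤ N * Real.exp (N * T) * (Hbar + K + Cg) :=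
  finite_difference_scheme_bound_general d m K₀ hK₀
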